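/- arXiv:1710.06655 — 3 statements merged into one kernel-verified Lean document; each statement's English description precedes it below -/
import Mathlib

section
/- Let σ₁ > 0, σ₂ > 0, and f(x, φ) = (1/√(2π(σ₁² + φ·σ₂²)))·exp(−x²/(2(σ₁² + φ·σ₂²))) for φ ∈ {0,1}. Then for real x_m, x_n: if x_m² < x_n² then f(x_m,0)·f(x_n,1) > f(x_m,1)·f(x_n,0); if x_m² = x_n² then equality holds; and if x_m² > x_n² then f(x_m,0)·f(x_n,1) < f(x_m,1)·f(x_n,0). -/
/-!
The normalising constants of the two Gaussians appear once on each side of the comparison and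
cancel, so the ratio of the two sides is `exp ((x_n² - x_m²) (1/(2σ₁²) - 1/(2(σ₁² + σ₂²))))`.
Since the background variance is the smaller one, the second factor is positive and the sign of
the exponent is that of `x_n² - x_m²`.
-/

open Real ProbabilityTheory NNReal

namespace ProbabilityTheory

lemma gaussianPDFReal_mul_gaussianPDFReal_swap (μ : ℝ) (a b : ℝ≥0) (u w : ℝ) :
    gaussianPDFReal μ a u * gaussianPDFReal μ b w =
      gaussianPDFReal μ b u * gaussianPDFReal μ a w *
        exp (((w - μ) ^ 2 - (u - μ) ^ 2) * ((2 * (a : ℝ))⁻¹ - (2 * (b : ℝ))⁻¹)) := by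
  have hexp : -(u - μ) ^ 2 / (2 * a) + -(w - μ) ^ 2 / (2 * b) =
      -(u - μ) ^ 2 / (2 * b) + -(w - μ) ^ 2 / (2 * a) +
        ((w - μ) ^ 2 - (u - μ) ^ 2) * ((2 * (a : ℝ))⁻¹ - (2 * (b : ℝ))⁻¹) := by
    ring
  calc _ = (√(2 * π * a))⁻¹ * (√(2 * π * b))⁻¹ *
        exp (-(u - μ) ^ 2 / (2 * a) + -(w - μ) ^ 2 / (2 * b)) := by
        rw [gaussianPDFReal, gaussianPDFReal, exp_add]; ring
    _ = _ := by rw [hexp, exp_add, exp_add, gaussianPDFReal, gaussianPDFReal]; ring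

lemma gaussianPDFReal_mul_gaussianPDFReal_swap_lt_iff (μ : ℝ) {a b : ℝ≥0} (ha : a ≠ 0)
    (hab : a < b) (u w : ℝ) :
    gaussianPDFReal μ b u * gaussianPDFReal μ a w <
        gaussianPDFReal μ a u * gaussianPDFReal μ b w ↔ (u - μ) ^ 2 < (w - μ) ^ 2 := by
  have hb : b ≠ 0 := (pos_of_ne_zero ha |>.trans hab).ne'
  have hpos : 0 < gaussianPDFReal μ b u * gaussianPDFReal μ a w :=
    mul_pos (gaussianPDFReal_pos μ b u hb) (gaussianPDFReal_pos μ a w ha)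
  have hgap : 0 < (2 * (a : ℝ))⁻¹ - (2 * (b : ℝ))⁻¹ := by
    rw [sub_pos]
    gcongr
  rw [gaussianPDFReal_mul_gaussianPDFReal_swap μ a b u w, lt_mul_iff_one_lt_right hpos,
    one_lt_exp_iff, mul_pos_iff_of_pos_right hgap, sub_pos]

end ProbabilityTheory

theorem stmt_1 (σ₁ σ₂ : ℝ) (hσ₁ : 0 < σ₁) (hσ₂ : 0 < σ₂)
    (f : ℝ → ℝ → ℝ)
    (hf : ∀ x φ, f x φ =
      (Real.sqrt (2 * Real.pi * (σ₁ ^ 2 + φ * σ₂ ^ 2)))⁻¹ *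
        Real.exp (-(x ^ 2) / (2 * (σ₁ ^ 2 + φ * σ₂ ^ 2))))
    (xm xn : ℝ) :
    (xm ^ 2 < xn ^ 2 → f xm 0 * f xn 1 > f xm 1 * f xn 0) ∧
    (xm ^ 2 = xn ^ 2 → f xm 0 * f xn 1 = f xm 1 * f xn 0) ∧
    (xm ^ 2 > xn ^ 2 → f xm 0 * f xn 1 < f xm 1 * f xn 0) := by
  set a : ℝ≥0 := ⟨σ₁ ^ 2, sq_nonneg _⟩
  set b : ℝ≥0 := ⟨σ₁ ^ 2 + σ₂ ^ 2, by positivity⟩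
  have hfa (x : ℝ) : f x 0 = gaussianPDFReal 0 a x := by
    simp only [hf, gaussianPDFReal, sub_zero, zero_mul, add_zero]
    rfl
  have hfb (x : ℝ) : f x 1 = gaussianPDFReal 0 b x := by
    simp only [hf, gaussianPDFReal, sub_zero, one_mul]
    rfl
  have ha : a ≠ 0 := by
    rw [ne_eq, ← NNReal.coe_eq_zero]; exact (pow_pos hσ₁ 2).ne'
  have hab : a < b := by
    rw [← NNReal.coe_lt_coe]; exact lt_add_of_pos_right _ (pow_pos hσ₂ 2)
  simp only [hfa, hfb]
  have hlt (u w : ℝ) (h : u ^ 2 < w ^ 2) :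
      gaussianPDFReal 0 b u * gaussianPDFReal 0 a w <
        gaussianPDFReal 0 a u * gaussianPDFReal 0 b w := by
    rwa [gaussianPDFReal_mul_gaussianPDFReal_swap_lt_iff 0 ha hab, sub_zero, sub_zero]
  refine ⟨hlt xm xn, fun h ↦ ?_, fun h ↦ ?_⟩
  · rw [gaussianPDFReal_mul_gaussianPDFReal_swap 0 a b, sub_zero, sub_zero, h, sub_self,
      zero_mul, exp_zero, mul_one]
  · rw [mul_comm, mul_comm (gaussianPDFReal 0 b xm)]
    exact hlt xn xm h
end

section
/- Let σ₁, σ₂ > 0, ρ ∈ (0,1), and x : Fin N → ℝ with all |x n| distinct. If φ̂ : Fin N → {0,1} maximizes the likelihood L(φ) = (∏ n, ρ^{φ n}·(1−ρ)^{1−φ n}·f(x n, φ n)), then there exists a threshold T ∈ ℝ such that φ̂ n = 1 if and only if |x n| ≥ T (or φ̂ is identically 0). -/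
/-!
The likelihood factorizes over the samples, so a maximizer is optimal in each coordinate
separately: `φ̂ n = 1` forces `(1 - ρ) f(x n, 0) ≤ ρ f(x n, 1)`. Since `σ₂ > 0`, the ratio
`f(x, 1) / f(x, 0)` is strictly increasing in `|x|`, so `{n | φ̂ n = 1}` is closed upwards
in `|x n|` (distinctness of the `|x n|` rules out ties), and the smallest `|x n|` in it is the
threshold.
-/

open Real Finset ProbabilityTheory
open scoped NNReal

theorem gaussianPDFReal_mul_lt_mul_of_abs_lt {μ : ℝ} {v₀ v₁ : ℝ≥0} (hv₀ : v₀ ≠ 0)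
    (hv : v₀ < v₁) {x y : ℝ} (hxy : |x - μ| < |y - μ|) :
    gaussianPDFReal μ v₁ x * gaussianPDFReal μ v₀ y <
      gaussianPDFReal μ v₀ x * gaussianPDFReal μ v₁ y := by
  have hv₀ : (0 : ℝ) < v₀ := by positivity
  have hv : (v₀ : ℝ) < v₁ := hv
  have hv₁ : (0 : ℝ) < v₁ := hv₀.trans hv
  have hsq : (x - μ) ^ 2 < (y - μ) ^ 2 := sq_lt_sq.mpr hxy
  have hexp : -(x - μ) ^ 2 / (2 * v₁) + -(y - μ) ^ 2 / (2 * v₀) <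
      -(x - μ) ^ 2 / (2 * v₀) + -(y - μ) ^ 2 / (2 * v₁) := by
    have hprec : 1 / (2 * (v₁ : ℝ)) < 1 / (2 * v₀) := by gcongr
    have := mul_pos (sub_pos.2 hsq) (sub_pos.2 hprec)
    linear_combination this
  set c := (√(2 * π * v₀))⁻¹ * (√(2 * π * v₁))⁻¹
  have hc : 0 < c := by
    have := pi_pos
    positivity
  calc gaussianPDFReal μ v₁ x * gaussianPDFReal μ v₀ y
      = c * rexp (-(x - μ) ^ 2 / (2 * v₁) + -(y - μ) ^ 2 / (2 * v₀)) := by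
        rw [exp_add, gaussianPDFReal, gaussianPDFReal]; ring
    _ < c * rexp (-(x - μ) ^ 2 / (2 * v₀) + -(y - μ) ^ 2 / (2 * v₁)) := by gcongr
    _ = gaussianPDFReal μ v₀ x * gaussianPDFReal μ v₁ y := by
        rw [exp_add, gaussianPDFReal, gaussianPDFReal]; ring

theorem le_apply_of_forall_prod_le {ι α : Type*} [Fintype ι] [DecidableEq ι] {t : ι → α → ℝ}
    (ht : ∀ k a, 0 < t k a) {φ : ι → α} (hφ : ∀ ψ : ι → α, ∏ k, t k (ψ k) ≤ ∏ k, t k (φ k))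
    (k : ι) (a : α) : t k a ≤ t k (φ k) := by
  have hrest : 0 < ∏ j ∈ univ.erase k, t j (φ j) := prod_pos fun j _ => ht j _
  have hupdate : ∏ j, t j (Function.update φ k a j) = t k a * ∏ j ∈ univ.erase k, t j (φ j) := by
    rw [← mul_prod_erase univ _ (mem_univ k), Function.update_self]
    congr 1
    exact prod_congr rfl fun j hj => by rw [Function.update_of_ne (ne_of_mem_erase hj)]
  have := hφ (Function.update φ k a)
  rw [hupdate, ← mul_prod_erase univ _ (mem_univ k)] at this
  exact le_of_mul_le_mul_right this hrest

theorem exists_threshold_of_upward_closed {ι α : Type*} [Finite ι] [LinearOrder α]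
    (P : ι → Prop) (s : ι → α) (hP : ∀ n m, P n → s n ≤ s m → P m) :
    (∃ T, ∀ n, P n ↔ T ≤ s n) ∨ ∀ n, ¬P n := by
  by_cases h : ∃ n, P n
  · obtain ⟨a, ha, hmin⟩ := Set.exists_min_image {n | P n} s (Set.toFinite _) h
    exact Or.inl ⟨s a, fun n => ⟨hmin n, hP a n ha⟩⟩
  · exact Or.inr (not_exists.mp h)

theorem apply_eq_one_of_exchange {ι α : Type*} [Fintype ι] [DecidableEq ι] [LinearOrder α]
    {t : ι → Fin 2 → ℝ} (ht : ∀ k a, 0 < t k a) {φ : ι → Fin 2}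
    (hφ : ∀ ψ : ι → Fin 2, ∏ k, t k (ψ k) ≤ ∏ k, t k (φ k)) {s : ι → α}
    (hs : Function.Injective s) (hex : ∀ n m, s n < s m → t n 1 * t m 0 < t n 0 * t m 1)
    {n m : ι} (hn : φ n = 1) (hnm : s n ≤ s m) : φ m = 1 := by
  by_contra hm
  have hm : φ m = 0 := by omega
  have hlt : s n < s m := hnm.lt_of_ne fun h => by simp [hs h, hm] at hn
  have hn1 : t n 0 ≤ t n 1 := hn ▸ le_apply_of_forall_prod_le ht hφ n 0
  have hm0 : t m 1 ≤ t m 0 := hm ▸ le_apply_of_forall_prod_le ht hφ m 1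
  have := mul_le_mul hn1 hm0 (ht m 1).le (ht n 1).le
  linarith [hex n m hlt]

theorem stmt_3 (N : ℕ) (σ₁ σ₂ ρ : ℝ) (hσ₁ : 0 < σ₁) (hσ₂ : 0 < σ₂)
    (hρ : ρ ∈ Set.Ioo (0 : ℝ) 1)
    (x : Fin N → ℝ) (hdist : Function.Injective (fun n => |x n|))
    (f : ℝ → ℝ → ℝ)
    (hf : ∀ x' φ, f x' φ =
      (Real.sqrt (2 * Real.pi * (σ₁ ^ 2 + φ * σ₂ ^ 2)))⁻¹ *
        Real.exp (-(x' ^ 2) / (2 * (σ₁ ^ 2 + φ * σ₂ ^ 2))))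
    (L : (Fin N → Fin 2) → ℝ)
    (hL : ∀ φ, L φ =
      ∏ n, ρ ^ (φ n : ℕ) * (1 - ρ) ^ (1 - (φ n : ℕ)) * f (x n) ((φ n : ℕ) : ℝ))
    (phiHat : Fin N → Fin 2) (hmax : ∀ ψ, L ψ ≤ L phiHat) :
    (∃ T : ℝ, ∀ n, phiHat n = 1 ↔ T ≤ |x n|) ∨ (∀ n, phiHat n = 0) := by
  obtain ⟨hρ0, hρ1⟩ := hρ
  obtain ⟨v₀, hv₀_def⟩ : ∃ v : ℝ≥0, (v : ℝ) = σ₁ ^ 2 := ⟨⟨_, sq_nonneg _⟩, rfl⟩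
  obtain ⟨v₁, hv₁_def⟩ : ∃ v : ℝ≥0, (v : ℝ) = σ₁ ^ 2 + σ₂ ^ 2 := ⟨⟨_, by positivity⟩, rfl⟩
  have hv₀ : v₀ ≠ 0 := by rw [← NNReal.coe_ne_zero, hv₀_def]; positivity
  have hv : v₀ < v₁ := by rw [← NNReal.coe_lt_coe, hv₀_def, hv₁_def]; linarith [pow_pos hσ₂ 2]
  set t : Fin N → Fin 2 → ℝ := fun n v => ρ ^ (v : ℕ) * (1 - ρ) ^ (1 - (v : ℕ)) * f (x n) (v : ℕ)
  have ht0 : ∀ n, t n 0 = (1 - ρ) * gaussianPDFReal 0 v₀ (x n) := by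
    simp [t, hf, gaussianPDFReal, hv₀_def]
  have ht1 : ∀ n, t n 1 = ρ * gaussianPDFReal 0 v₁ (x n) := by
    simp [t, hf, gaussianPDFReal, hv₁_def]
  have htpos : ∀ n v, 0 < t n v := by
    intro n v
    fin_cases v
    · simpa [ht0] using mul_pos (sub_pos.2 hρ1) (gaussianPDFReal_pos 0 v₀ (x n) hv₀)
    · have hv₁ : v₁ ≠ 0 := (pos_iff_ne_zero.2 hv₀ |>.trans hv).ne'
      simpa [ht1] using mul_pos hρ0 (gaussianPDFReal_pos 0 v₁ (x n) hv₁)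
  have hex : ∀ n m, |x n| < |x m| → t n 1 * t m 0 < t n 0 * t m 1 := by
    intro n m hnm
    have := gaussianPDFReal_mul_lt_mul_of_abs_lt hv₀ hv (μ := 0) (by simpa using hnm)
    rw [ht0, ht0, ht1, ht1]
    nlinarith [mul_pos hρ0 (sub_pos.2 hρ1)]
  have hmax' : ∀ ψ : Fin N → Fin 2, ∏ k, t k (ψ k) ≤ ∏ k, t k (phiHat k) := fun ψ => by
    simpa only [hL] using hmax ψ
  refine (exists_threshold_of_upward_closed (phiHat · = 1) (|x ·|)
    fun n m hn hnm => apply_eq_one_of_exchange htpos hmax' hdist hex hn hnm).imp_right ?_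
  exact fun h n => by have := h n; omega
end

section
/- Let α, β : Fin N → {0,1} differ only at indices m ≠ n with α m = 0, α n = 1, β m = 1, β n = 0, and let σ₁, σ₂ > 0, ρ ∈ (0,1). If |x n| > |x m|, then the full posterior likelihood satisfies L(α) > L(β), where L(φ) = ∏_k ρ^{φ k}·(1−ρ)^{1−φ k}·g(x k; σ₁² + φ k·σ₂²). -/
open Real Finset

/-!
Swapping the labels of `m` and `n` keeps the prior weight `ρ (1 - ρ)` of the pair and leaves all
other factors untouched, so only the Gaussian part of the pair matters. With `v₀ = σ₁ ^ 2` and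
`v₁ = σ₁ ^ 2 + σ₂ ^ 2`, the log of its likelihood ratio is
`(x n ^ 2 - x m ^ 2) (v₁ - v₀) / (2 v₀ v₁) > 0`.
-/

theorem Finset.prod_lt_prod_of_eq_off_pair {ι R : Type*} [Fintype ι] [DecidableEq ι]
    [CommSemiring R] [PartialOrder R] [IsStrictOrderedRing R] {f g : ι → R} {m n : ι}
    (hmn : m ≠ n) (hpos : ∀ k, k ≠ m → k ≠ n → 0 < f k)
    (heq : ∀ k, k ≠ m → k ≠ n → g k = f k) (hlt : g m * g n < f m * f n) :
    ∏ k, g k < ∏ k, f k := by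
  have mem_pair_compl {k : ι} (hk : k ∈ ({m, n} : Finset ι)ᶜ) : k ≠ m ∧ k ≠ n := by
    simpa only [mem_compl, mem_insert, mem_singleton, not_or] using hk
  have hrest : ∏ k ∈ {m, n}ᶜ, g k = ∏ k ∈ {m, n}ᶜ, f k :=
    prod_congr rfl fun k hk => heq k (mem_pair_compl hk).1 (mem_pair_compl hk).2
  have hrest_pos : 0 < ∏ k ∈ {m, n}ᶜ, f k :=
    prod_pos fun k hk => hpos k (mem_pair_compl hk).1 (mem_pair_compl hk).2
  rw [← prod_mul_prod_compl {m, n} g, ← prod_mul_prod_compl {m, n} f, prod_pair hmn,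
    prod_pair hmn, hrest]
  exact mul_lt_mul_of_pos_right hlt hrest_pos

noncomputable def centeredGaussian (x v : ℝ) : ℝ :=
  (√(2 * π * v))⁻¹ * exp (-(x ^ 2) / (2 * v))

theorem centeredGaussian_pos (x : ℝ) {v : ℝ} (hv : 0 < v) : 0 < centeredGaussian x v := by
  unfold centeredGaussian
  have : 0 < √(2 * π * v) := sqrt_pos.2 (by positivity)
  positivity

theorem centeredGaussian_mul_lt_mul {a b v₀ v₁ : ℝ} (hv₀ : 0 < v₀) (hv : v₀ < v₁)
    (hab : a ^ 2 < b ^ 2) :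
    centeredGaussian a v₁ * centeredGaussian b v₀ <
      centeredGaussian a v₀ * centeredGaussian b v₁ := by
  have hv₁ : 0 < v₁ := hv₀.trans hv
  have hexp : -(a ^ 2) / (2 * v₁) + -(b ^ 2) / (2 * v₀) <
      -(a ^ 2) / (2 * v₀) + -(b ^ 2) / (2 * v₁) := by
    have hratio : -(a ^ 2) / (2 * v₀) + -(b ^ 2) / (2 * v₁) -
        (-(a ^ 2) / (2 * v₁) + -(b ^ 2) / (2 * v₀)) =
        (b ^ 2 - a ^ 2) * (v₁ - v₀) / (2 * v₀ * v₁) := by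
      field_simp
      ring
    have : 0 < (b ^ 2 - a ^ 2) * (v₁ - v₀) / (2 * v₀ * v₁) :=
      div_pos (mul_pos (by linarith) (by linarith)) (by positivity)
    linarith
  have hnorm : 0 < (√(2 * π * v₀))⁻¹ * (√(2 * π * v₁))⁻¹ := by
    have : 0 < √(2 * π * v₀) := sqrt_pos.2 (by positivity)
    have : 0 < √(2 * π * v₁) := sqrt_pos.2 (by positivity)
    positivity
  unfold centeredGaussian
  calc _ = (√(2 * π * v₀))⁻¹ * (√(2 * π * v₁))⁻¹ *
        exp (-(a ^ 2) / (2 * v₁) + -(b ^ 2) / (2 * v₀)) := by rw [exp_add]; ring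
    _ < (√(2 * π * v₀))⁻¹ * (√(2 * π * v₁))⁻¹ *
        exp (-(a ^ 2) / (2 * v₀) + -(b ^ 2) / (2 * v₁)) :=
      mul_lt_mul_of_pos_left (exp_lt_exp.2 hexp) hnorm
    _ = _ := by rw [exp_add]; ring

theorem stmt_18 (N : ℕ) (ρ σ₁ σ₂ : ℝ) (hρ : ρ ∈ Set.Ioo (0 : ℝ) 1)
    (hσ₁ : 0 < σ₁) (hσ₂ : 0 < σ₂)
    (x : Fin N → ℝ)
    (α β : Fin N → Fin 2) (m n : Fin N) (hmn : m ≠ n)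
    (hαm : α m = 0) (hαn : α n = 1) (hβm : β m = 1) (hβn : β n = 0)
    (hagree : ∀ k, k ≠ m → k ≠ n → α k = β k)
    (hx : |x m| < |x n|)
    (g : ℝ → ℝ → ℝ)
    (hg : ∀ x' v, g x' v = (Real.sqrt (2 * Real.pi * v))⁻¹ * Real.exp (-(x' ^ 2) / (2 * v)))
    (L : (Fin N → Fin 2) → ℝ)
    (hL : ∀ φ, L φ = ∏ k, ρ ^ (φ k : ℕ) * (1 - ρ) ^ (1 - (φ k : ℕ)) *
      g (x k) (σ₁ ^ 2 + ((φ k : ℕ) : ℝ) * σ₂ ^ 2)) :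
    L β < L α := by
  obtain ⟨hρ₀, hρ₁⟩ := hρ
  have hρ₁' : 0 < 1 - ρ := sub_pos.2 hρ₁
  obtain rfl : g = centeredGaussian := funext fun x' => funext (hg x')
  have hv₀ : 0 < σ₁ ^ 2 := by positivity
  have hv : σ₁ ^ 2 < σ₁ ^ 2 + σ₂ ^ 2 := lt_add_of_pos_right _ (by positivity)
  have hpair := mul_lt_mul_of_pos_left
    (centeredGaussian_mul_lt_mul hv₀ hv (sq_lt_sq.2 hx)) (mul_pos hρ₀ hρ₁')
  rw [hL, hL]
  refine prod_lt_prod_of_eq_off_pair hmn (fun k _ _ => ?_)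
    (fun k hkm hkn => by rw [hagree k hkm hkn]) ?_
  · have : 0 < centeredGaussian (x k) (σ₁ ^ 2 + ((α k : ℕ) : ℝ) * σ₂ ^ 2) :=
      centeredGaussian_pos _ (by positivity)
    positivity
  · simp only [hαm, hαn, hβm, hβn, Fin.val_zero, Fin.val_one, Nat.cast_zero, Nat.cast_one,
      zero_mul, one_mul, add_zero, Nat.sub_zero, Nat.sub_self, pow_zero, pow_one, mul_one]
    convert hpair using 1 <;> ring
end
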